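/- arXiv:1907.00369 — 6 statements merged into one kernel-verified Lean document; each statement's English description precedes it below -/
import Mathlib

section
/- Let A, B be positive definite n×n complex matrices and X a Hermitian positive semidefinite matrix such that the 2n×2n block matrix [[A, X],[X, B]] is positive semidefinite. Then X ≤ A♯B in the Loewner order. -/
open Matrix
open scoped ComplexOrder

/-- Square root of a (Hermitian positive semidefinite) matrix via the
continuous functional calculus. -/
noncomputable def msqrt {n : Type*} [Fintype n] [DecidableEq n]
    (M : Matrix n n ℂ) : Matrix n n ℂ :=
  cfc Real.sqrt M

/-- Real power of a (Hermitian positive semidefinite) matrix via the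
continuous functional calculus. -/
noncomputable def mpow {n : Type*} [Fintype n] [DecidableEq n]
    (M : Matrix n n ℂ) (t : ℝ) : Matrix n n ℂ :=
  cfc (fun x : ℝ => x ^ t) M

/-- Continuous function applied to a Hermitian matrix via functional calculus. -/
noncomputable def mfun {n : Type*} [Fintype n] [DecidableEq n]
    (f : ℝ → ℝ) (M : Matrix n n ℂ) : Matrix n n ℂ :=
  cfc f M

/-- The absolute value `|M| = (Mᴴ M)^{1/2}` of a matrix. -/
noncomputable def matAbs {n : Type*} [Fintype n] [DecidableEq n]
    (M : Matrix n n ℂ) : Matrix n n ℂ :=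
  msqrt (Mᴴ * M)

/-- The absolute value `|Mᴴ| = (M Mᴴ)^{1/2}` of the adjoint of a matrix. -/
noncomputable def matAbsStar {n : Type*} [Fintype n] [DecidableEq n]
    (M : Matrix n n ℂ) : Matrix n n ℂ :=
  msqrt (M * Mᴴ)

/-- Trace norm (sum of singular values) of a matrix. -/
noncomputable def trNorm {n : Type*} [Fintype n] [DecidableEq n]
    (M : Matrix n n ℂ) : ℝ :=
  ((matAbs M).trace).re

/-- Operator norm of a matrix acting on Euclidean space. -/
noncomputable def opNorm {n : Type*} [Fintype n] [DecidableEq n]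
    (M : Matrix n n ℂ) : ℝ :=
  ‖Matrix.toEuclideanCLM (𝕜 := ℂ) M‖

/-- Frobenius (Hilbert-Schmidt) norm of a matrix. -/
noncomputable def frobNorm {n : Type*} [Fintype n] [DecidableEq n]
    (M : Matrix n n ℂ) : ℝ :=
  Real.sqrt ((Mᴴ * M).trace).re

/-- Geometric mean `A♯B = A^{1/2}(A^{-1/2} B A^{-1/2})^{1/2} A^{1/2}`
of (positive definite) matrices. -/
noncomputable def geom {n : Type*} [Fintype n] [DecidableEq n]
    (A B : Matrix n n ℂ) : Matrix n n ℂ :=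
  msqrt A * msqrt ((msqrt A)⁻¹ * B * (msqrt A)⁻¹) * msqrt A

/-- Weighted geometric mean `A♯_θB = A^{1/2}(A^{-1/2} B A^{-1/2})^θ A^{1/2}`. -/
noncomputable def geomW {n : Type*} [Fintype n] [DecidableEq n]
    (A B : Matrix n n ℂ) (θ : ℝ) : Matrix n n ℂ :=
  msqrt A * mpow ((msqrt A)⁻¹ * B * (msqrt A)⁻¹) θ * msqrt A


/-! Conjugating by `A^{-1/2}` turns the Schur complement inequality `X A⁻¹ X ≤ B` into
`Y² ≤ M` for `Y = A^{-1/2} X A^{-1/2} ≥ 0` and `M = A^{-1/2} B A^{-1/2}`. Since the square root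
is operator monotone, `Y = √(Y²) ≤ √M`, and conjugating back by `A^{1/2}` gives `X ≤ A♯B`. -/

lemma CFC.le_sqrt_of_mul_self_le {A : Type*} [CStarAlgebra A] [PartialOrder A]
    [StarOrderedRing A] {x b : A} (hx : 0 ≤ x) (h : x * x ≤ b) : x ≤ CFC.sqrt b :=
  CFC.sqrt_mul_self x hx ▸ CFC.sqrt_le_sqrt _ _ h

open scoped MatrixOrder Matrix.Norms.L2Operator

lemma Matrix.conjTranspose_mul_inv_mul_le_of_fromBlocks_posSemidef {𝕜 m n : Type*} [RCLike 𝕜]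
    [Fintype m] [Fintype n] [DecidableEq m] {A : Matrix m m 𝕜} {B : Matrix n n 𝕜}
    {X : Matrix m n 𝕜} (hA : A.PosDef) (h : (fromBlocks A X Xᴴ B).PosSemidef) :
    Xᴴ * A⁻¹ * X ≤ B :=
  letI := hA.isUnit.invertible
  le_iff.mpr <| (PosDef.fromBlocks₁₁ X B hA).mp h

section GeometricMean

variable {n : Type*} [Fintype n] [DecidableEq n]

lemma msqrt_eq_sqrt {M : Matrix n n ℂ} (hM : 0 ≤ M) : msqrt M = CFC.sqrt M := by
  rw [msqrt, CFC.sqrt_eq_real_sqrt M hM, cfcₙ_eq_cfc]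

lemma le_geom_of_mul_inv_mul_le {A B X : Matrix n n ℂ} (hA : A.PosDef) (hX : 0 ≤ X)
    (h : X * A⁻¹ * X ≤ B) : X ≤ geom A B := by
  set S := CFC.sqrt A
  have hS : IsSelfAdjoint S := (CFC.sqrt_nonneg A).isSelfAdjoint
  have hSS : S * S = A := CFC.sqrt_mul_sqrt_self A
  have hSdet : IsUnit S.det :=
    (isUnit_iff_isUnit_det S).mp ((CFC.isUnit_sqrt_iff A).mpr hA.isUnit)
  have hSinv : IsSelfAdjoint S⁻¹ := IsHermitian.inv hS
  set Y := S⁻¹ * X * S⁻¹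
  set M := S⁻¹ * B * S⁻¹
  have hY : 0 ≤ Y := hSinv.conjugate_nonneg hX
  have hYY : Y * Y ≤ M :=
    calc Y * Y = S⁻¹ * (X * A⁻¹ * X) * S⁻¹ := by
          rw [← hSS, Matrix.mul_inv_rev]; simp only [Y, mul_assoc]
      _ ≤ M := hSinv.conjugate_le_conjugate h
  have hM : 0 ≤ M := hY.isSelfAdjoint.mul_self_nonneg.trans hYY
  calc X = S * Y * S := by
        rw [mul_assoc, mul_assoc, nonsing_inv_mul S hSdet, mul_one,
          mul_nonsing_inv_cancel_left S X hSdet]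
    _ ≤ S * CFC.sqrt M * S := hS.conjugate_le_conjugate (CFC.le_sqrt_of_mul_self_le hY hYY)
    _ = geom A B := by rw [geom, msqrt_eq_sqrt hA.posSemidef.nonneg, msqrt_eq_sqrt hM]

end GeometricMean

theorem le_geom_of_block_posSemidef_general {n : Type*} [Fintype n] [DecidableEq n]
    (A B X : Matrix n n ℂ) (hA : A.PosDef)
    (hX : X.PosSemidef)
    (hblock : (Matrix.fromBlocks A X X B).PosSemidef) :
    (geom A B - X).PosSemidef := by
  have hschur : X * A⁻¹ * X ≤ B := by
    have h := conjTranspose_mul_inv_mul_le_of_fromBlocks_posSemidef (X := X) (B := B) hA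
    rw [hX.1.eq] at h
    exact h hblock
  exact le_iff.mp (le_geom_of_mul_inv_mul_le hA hX.nonneg hschur)

/-- If `[[A, X],[X, B]] ≥ 0` with `A, B` positive definite and `X` positive
semidefinite, then `X ≤ A♯B` in the Loewner order. -/
theorem le_geom_of_block_posSemidef {n : Type*} [Fintype n] [DecidableEq n]
    (A B X : Matrix n n ℂ) (hA : A.PosDef) (hB : B.PosDef)
    (hX : X.PosSemidef)
    (hblock : (Matrix.fromBlocks A X X B).PosSemidef) :
    (geom A B - X).PosSemidef :=
  le_geom_of_block_posSemidef_general A B X hA hX hblock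
end

section
/- Let A, B be positive definite n×n complex matrices. Then the block matrix [[A, A♯B],[A♯B, B]] is positive semidefinite; consequently A♯B is the maximum, in the Loewner order, of the set of positive semidefinite X with [[A,X],[X,B]] ≥ 0. -/
open Matrix
open scoped ComplexOrder

/-!
With `S = A^{1/2}` and `T = (S⁻¹ B S⁻¹)^{1/2}` we have `A = S²`, `B = S T² S` and `A♯B = S T S`,
so the block matrix is `Mᴴ M` for `M = [[S, T S], [0, 0]]`. Conversely, if `[[A, X], [X, B]] ≥ 0`,
the Schur complement gives `X A⁻¹ X ≤ B`, that is `Y² ≤ T²` for `Y = S⁻¹ X S⁻¹ ≥ 0`; since the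
square root is operator monotone, `Y ≤ T`, and conjugating back by `S` gives `X ≤ A♯B`.
-/

lemma CFC.le_of_mul_self_le_mul_self {A : Type*} [CStarAlgebra A] [PartialOrder A]
    [StarOrderedRing A] {a b : A} (ha : 0 ≤ a) (hb : 0 ≤ b) (h : a * a ≤ b * b) : a ≤ b := by
  simpa only [CFC.sqrt_mul_self a ha, CFC.sqrt_mul_self b hb] using CFC.sqrt_le_sqrt _ _ h

namespace Matrix

open scoped MatrixOrder Matrix.Norms.L2Operator

variable {n : Type*} [Fintype n] [DecidableEq n]

lemma conj_nonsing_inv_conj {α : Type*} [CommRing α] {S : Matrix n n α} (hS : IsUnit S.det)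
    (M : Matrix n n α) : S * (S⁻¹ * M * S⁻¹) * S = M := by
  simp only [Matrix.mul_assoc, nonsing_inv_mul _ hS, mul_one, mul_nonsing_inv_cancel_left _ _ hS]

lemma nonsing_inv_conj_conj {α : Type*} [CommRing α] {S : Matrix n n α} (hS : IsUnit S.det)
    (M : Matrix n n α) : S⁻¹ * (S * M * S) * S⁻¹ = M := by
  simp only [Matrix.mul_assoc, mul_nonsing_inv _ hS, mul_one, nonsing_inv_mul_cancel_left _ _ hS]

lemma PosSemidef.msqrt_eq_sqrt {M : Matrix n n ℂ} (hM : M.PosSemidef) :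
    msqrt M = CFC.sqrt M := by
  rw [msqrt, CFC.sqrt_eq_real_sqrt M hM.nonneg, cfcₙ_eq_cfc]

lemma PosSemidef.posSemidef_msqrt {M : Matrix n n ℂ} (hM : M.PosSemidef) :
    (msqrt M).PosSemidef := by
  rw [hM.msqrt_eq_sqrt]
  exact (CFC.sqrt_nonneg M).posSemidef

lemma PosDef.posDef_msqrt {M : Matrix n n ℂ} (hM : M.PosDef) : (msqrt M).PosDef := by
  rw [hM.posSemidef.msqrt_eq_sqrt]
  exact hM.isStrictlyPositive.sqrt.posDef

lemma PosSemidef.msqrt_mul_msqrt {M : Matrix n n ℂ} (hM : M.PosSemidef) :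
    msqrt M * msqrt M = M := by
  rw [hM.msqrt_eq_sqrt]
  exact CFC.sqrt_mul_sqrt_self M hM.nonneg

lemma posSemidef_fromBlocks_mul_self_conj {𝕜 : Type*} [RCLike 𝕜] {S T : Matrix n n 𝕜}
    (hS : S.IsHermitian) (hT : T.IsHermitian) :
    (fromBlocks (S * S) (S * T * S) (S * T * S) (S * (T * T) * S)).PosSemidef := by
  have : fromBlocks (S * S) (S * T * S) (S * T * S) (S * (T * T) * S)
      = (fromBlocks S (T * S) 0 0)ᴴ * fromBlocks S (T * S) 0 0 := by
    simp [fromBlocks_conjTranspose, fromBlocks_multiply, conjTranspose_mul, hS.eq, hT.eq,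
      Matrix.mul_assoc]
  rw [this]
  exact posSemidef_conjTranspose_mul_self _

lemma PosDef.mul_inv_mul_le_of_posSemidef_fromBlocks {𝕜 : Type*} [RCLike 𝕜]
    {A B X : Matrix n n 𝕜} (hA : A.PosDef) (hX : X.IsHermitian)
    (h : (fromBlocks A X X B).PosSemidef) : X * A⁻¹ * X ≤ B := by
  have := hA.isUnit.invertible
  have hschur := (PosDef.fromBlocks₁₁ X B hA).mp (hX.eq.symm ▸ h)
  rwa [hX.eq] at hschur

lemma le_conj_of_posSemidef_fromBlocks {S T X : Matrix n n ℂ} (hS : S.PosDef)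
    (hT : T.PosSemidef) (hX : X.PosSemidef)
    (h : (fromBlocks (S * S) X X (S * (T * T) * S)).PosSemidef) : X ≤ S * T * S := by
  have hS_unit : IsUnit S.det := hS.isUnit.map detMonoidHom
  have hSS : (S * S).PosDef := by
    have hSS_psd := posSemidef_conjTranspose_mul_self S
    rw [hS.1.eq] at hSS_psd
    exact hSS_psd.posDef_iff_isUnit.mpr (hS.isUnit.mul hS.isUnit)
  have hSinv : S⁻¹.IsHermitian := hS.inv.1
  have hschur := hSS.mul_inv_mul_le_of_posSemidef_fromBlocks hX.1 h
  set Y := S⁻¹ * X * S⁻¹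
  have hYY : Y * Y ≤ T * T := by
    convert hSinv.isSelfAdjoint.conjugate_le_conjugate hschur using 1
    · simp only [Y, Matrix.mul_inv_rev, Matrix.mul_assoc]
    · exact (nonsing_inv_conj_conj hS_unit _).symm
  have hY : 0 ≤ Y := by simpa only [hSinv.eq] using (hX.mul_mul_conjTranspose_same S⁻¹).nonneg
  have hYT : Y ≤ T := CFC.le_of_mul_self_le_mul_self hY hT.nonneg hYY
  simpa only [Y, conj_nonsing_inv_conj hS_unit] using hS.1.isSelfAdjoint.conjugate_le_conjugate hYT

end Matrix

/-- The block matrix `[[A, A♯B],[A♯B, B]]` is positive semidefinite, and `A♯B`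
is the maximum of all positive semidefinite `X` with `[[A,X],[X,B]] ≥ 0`. -/
theorem geom_block_posSemidef_and_max {n : Type*} [Fintype n] [DecidableEq n]
    (A B : Matrix n n ℂ) (hA : A.PosDef) (hB : B.PosDef) :
    (Matrix.fromBlocks A (geom A B) (geom A B) B).PosSemidef ∧
      ∀ X : Matrix n n ℂ, X.PosSemidef →
        (Matrix.fromBlocks A X X B).PosSemidef → (geom A B - X).PosSemidef := by
  set S := msqrt A
  have hS : S.PosDef := hA.posDef_msqrt
  have hS_unit : IsUnit S.det := hS.isUnit.map detMonoidHom
  have hC : (S⁻¹ * B * S⁻¹).PosSemidef := by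
    simpa only [hS.inv.1.eq] using hB.posSemidef.mul_mul_conjTranspose_same S⁻¹
  set T := msqrt (S⁻¹ * B * S⁻¹)
  have hT : T.PosSemidef := hC.posSemidef_msqrt
  have hA_eq : S * S = A := hA.posSemidef.msqrt_mul_msqrt
  have hB_eq : S * (T * T) * S = B := by
    rw [hC.msqrt_mul_msqrt, conj_nonsing_inv_conj hS_unit]
  have hgeom : geom A B = S * T * S := rfl
  rw [hgeom, ← hA_eq, ← hB_eq]
  exact ⟨posSemidef_fromBlocks_mul_self_conj hS.1 hT.1,
    fun X hX h => le_conj_of_posSemidef_fromBlocks hS hT hX h⟩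
end

section
/- Let A, B, X be n×n complex matrices with [[A, X],[X*, B]] positive semidefinite, and let p, q > 0 with 1/p + 1/q = 1. Then the operator norm satisfies ‖X‖ ≤ ‖A‖^{1/2} · ‖B‖^{1/2}, and more generally ‖X‖ ≤ ‖A^{p/2}‖^{1/p} · ‖B^{q/2}‖^{1/q}. -/
open Matrix
open scoped ComplexOrder

/-
Positivity of the block matrix `M` makes `(x, y) ↦ xᴴ M y` a semi-inner product on `m ⊕ n`,
and Cauchy–Schwarz for the vectors `(u, 0)` and `(0, v)` gives
`|uᴴ X v|² ≤ (uᴴ A u)(vᴴ B v)`. Bounding both quadratic forms on unit vectors by operator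
norms yields `‖X‖ ≤ ‖A‖^{1/2} ‖B‖^{1/2}`. The second inequality is the same one: for `A ≥ 0`
the functional calculus is isometric, so `‖A^{p/2}‖^{1/p} = ‖A‖^{1/2}`.
-/

namespace Matrix
variable {𝕜 m n : Type*} [RCLike 𝕜] [Fintype m] [Fintype n]

theorem PosSemidef.norm_dotProduct_mulVec_sq_le_of_fromBlocks
    {A : Matrix m m 𝕜} {B : Matrix n n 𝕜} {X : Matrix m n 𝕜}
    (h : (fromBlocks A X Xᴴ B).PosSemidef) (u : m → 𝕜) (v : n → 𝕜) :
    ‖star u ⬝ᵥ X *ᵥ v‖ ^ 2 ≤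
      RCLike.re (star u ⬝ᵥ A *ᵥ u) * RCLike.re (star v ⬝ᵥ B *ᵥ v) := by
  let _ := (fromBlocks A X Xᴴ B).toSeminormedAddCommGroup h
  let _ := (fromBlocks A X Xᴴ B).toInnerProductSpace h
  have key := inner_mul_inner_self_le (𝕜 := 𝕜) (u ⊕ᵥ 0 : m ⊕ n → 𝕜) (0 ⊕ᵥ v)
  rw [norm_inner_symm (0 ⊕ᵥ v : m ⊕ n → 𝕜), ← sq] at key
  have hinner : ∀ x y : m ⊕ n → 𝕜, inner 𝕜 x y = star x ⬝ᵥ fromBlocks A X Xᴴ B *ᵥ y :=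
    fun _ _ => dotProduct_comm _ _
  have hstar : ∀ (x : m → 𝕜) (y : n → 𝕜), star (x ⊕ᵥ y) = star x ⊕ᵥ star y :=
    fun _ _ => funext fun i => by cases i <;> rfl
  simpa only [hinner, hstar, fromBlocks_mulVec, sumElim_dotProduct_sumElim, star_zero,
    zero_dotProduct, mulVec_zero, add_zero, zero_add, Sum.elim_comp_inl, Sum.elim_comp_inr]
    using key

open scoped Matrix.Norms.L2Operator

variable [DecidableEq m] [DecidableEq n]

theorem re_star_dotProduct_mulVec_le_l2_opNorm (A : Matrix n n 𝕜) (x : EuclideanSpace 𝕜 n) :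
    RCLike.re (star x.ofLp ⬝ᵥ A *ᵥ x.ofLp) ≤ ‖A‖ * ‖x‖ ^ 2 :=
  calc RCLike.re (star x.ofLp ⬝ᵥ A *ᵥ x.ofLp)
      = RCLike.re (inner 𝕜 x ((EuclideanSpace.equiv n 𝕜).symm (A *ᵥ x.ofLp))) := by
        rw [EuclideanSpace.inner_eq_star_dotProduct, dotProduct_comm]; rfl
    _ ≤ ‖x‖ * ‖(EuclideanSpace.equiv n 𝕜).symm (A *ᵥ x.ofLp)‖ := re_inner_le_norm _ _
    _ ≤ ‖x‖ * (‖A‖ * ‖x‖) := by gcongr; exact A.l2_opNorm_mulVec x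
    _ = ‖A‖ * ‖x‖ ^ 2 := by ring

theorem PosSemidef.l2_opNorm_le_sqrt_mul_sqrt_of_fromBlocks
    {A : Matrix m m 𝕜} {B : Matrix n n 𝕜} {X : Matrix m n 𝕜}
    (h : (fromBlocks A X Xᴴ B).PosSemidef) : ‖X‖ ≤ √‖A‖ * √‖B‖ := by
  rw [l2_opNorm_def]
  set T := toEuclideanLin.trans LinearMap.toContinuousLinearMap X
  refine ContinuousLinearMap.opNorm_le_of_re_inner_le (by positivity) fun x y hx hy => ?_
  have hB : B.PosSemidef := h.submatrix Sum.inr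
  calc RCLike.re (inner 𝕜 (T x) y) ≤ ‖inner 𝕜 (T x) y‖ := RCLike.re_le_norm _
    _ = ‖star y.ofLp ⬝ᵥ X *ᵥ x.ofLp‖ := by
        rw [norm_inner_symm, EuclideanSpace.inner_eq_star_dotProduct, dotProduct_comm]; rfl
    _ ≤ √(RCLike.re (star y.ofLp ⬝ᵥ A *ᵥ y.ofLp) * RCLike.re (star x.ofLp ⬝ᵥ B *ᵥ x.ofLp)) :=
        Real.le_sqrt_of_sq_le (h.norm_dotProduct_mulVec_sq_le_of_fromBlocks _ _)
    _ ≤ √(‖A‖ * ‖B‖) := by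
        gcongr
        · exact hB.re_dotProduct_nonneg _
        · simpa [hy] using re_star_dotProduct_mulVec_le_l2_opNorm A y
        · simpa [hx] using re_star_dotProduct_mulVec_le_l2_opNorm B x
    _ = √‖A‖ * √‖B‖ := Real.sqrt_mul (norm_nonneg _) _

end Matrix

open scoped Matrix.Norms.L2Operator MatrixOrder in
theorem opNorm_mpow {n : Type*} [Fintype n] [DecidableEq n] {A : Matrix n n ℂ}
    (hA : A.PosSemidef) {t : ℝ} (ht : 0 < t) : opNorm (mpow A t) = opNorm A ^ t := by
  rw [opNorm, opNorm, mpow, ← CFC.rpow_eq_cfc_real hA.nonneg]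
  exact CFC.norm_rpow A ht hA.nonneg

theorem opNorm_holder_of_block_posSemidef_general {n : Type*} [Fintype n] [DecidableEq n]
    (A B X : Matrix n n ℂ)
    (hblock : (Matrix.fromBlocks A X Xᴴ B).PosSemidef)
    (p q : ℝ) (hp : 0 < p) (hq : 0 < q) :
    opNorm X ≤ opNorm A ^ ((1 : ℝ) / 2) * opNorm B ^ ((1 : ℝ) / 2) ∧
      opNorm X ≤ opNorm (mpow A (p / 2)) ^ (1 / p) * opNorm (mpow B (q / 2)) ^ (1 / q) := by
  have hX : opNorm X ≤ opNorm A ^ ((1 : ℝ) / 2) * opNorm B ^ ((1 : ℝ) / 2) := by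
    have := hblock.l2_opNorm_le_sqrt_mul_sqrt_of_fromBlocks
    rwa [Real.sqrt_eq_rpow, Real.sqrt_eq_rpow] at this
  have hpow {C : Matrix n n ℂ} (hC : C.PosSemidef) {r : ℝ} (hr : 0 < r) :
      opNorm (mpow C (r / 2)) ^ (1 / r) = opNorm C ^ ((1 : ℝ) / 2) := by
    have hC0 : 0 ≤ opNorm C := norm_nonneg _
    rw [opNorm_mpow hC (half_pos hr), ← Real.rpow_mul hC0]
    congr 1
    field_simp
  have hA : A.PosSemidef := hblock.submatrix Sum.inl
  have hB : B.PosSemidef := hblock.submatrix Sum.inr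
  rw [hpow hA hp, hpow hB hq]
  exact ⟨hX, hX⟩

/-- Operator norm Hölder inequality for a positive semidefinite block matrix. -/
theorem opNorm_holder_of_block_posSemidef {n : Type*} [Fintype n] [DecidableEq n]
    (A B X : Matrix n n ℂ)
    (hblock : (Matrix.fromBlocks A X Xᴴ B).PosSemidef)
    (p q : ℝ) (hp : 0 < p) (hq : 0 < q) (hpq : 1 / p + 1 / q = 1) :
    opNorm X ≤ opNorm A ^ ((1 : ℝ) / 2) * opNorm B ^ ((1 : ℝ) / 2) ∧
      opNorm X ≤ opNorm (mpow A (p / 2)) ^ (1 / p) * opNorm (mpow B (q / 2)) ^ (1 / q) :=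
  opNorm_holder_of_block_posSemidef_general A B X hblock p q hp hq
end

section
/- Jensen-type inequality for the trace norm: let φ : [0,∞) → [0,∞) be convex with φ(0) = 0, let A₁,…,A_m be positive semidefinite n×n complex matrices, and let γ₁,…,γ_m ≥ 0 with Σₖ γₖ = 1. Then ‖ φ(Σₖ γₖ Aₖ) ‖₁ ≤ ‖ Σₖ γₖ φ(Aₖ) ‖₁. -/
open Matrix
open scoped ComplexOrder

/-!
Let `b` be an orthonormal eigenbasis of `S = ∑ γₖ Aₖ`. Its eigenvalues are the convex
combinations `∑ₖ γₖ ⟨bᵢ, Aₖ bᵢ⟩`, so by convexity `tr φ(S) ≤ ∑ₖ γₖ ∑ᵢ φ(⟨bᵢ, Aₖ bᵢ⟩)`. The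
Peierls inequality `∑ᵢ φ(⟨bᵢ, A bᵢ⟩) ≤ tr φ(A)`, which is Jensen's inequality for the weights
`|⟨bᵢ, eⱼ⟩|²` over an eigenbasis `e` of `A`, bounds each inner sum by `tr φ(Aₖ)`. As `φ ≥ 0`,
both matrices in the statement are positive semidefinite, so their trace norms are their traces.
-/

open scoped MatrixOrder

namespace Matrix

variable {𝕜 n : Type*} [RCLike 𝕜] [Fintype n]

lemma trace_eq_sum_star_dotProduct_mulVec {ι : Type*} [Fintype ι] (M : Matrix n n 𝕜)
    (b : OrthonormalBasis ι 𝕜 (EuclideanSpace 𝕜 n)) :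
    M.trace = ∑ i, star ⇑(b i) ⬝ᵥ M *ᵥ ⇑(b i) := by
  classical
  rw [← trace_toLin_eq M (PiLp.basisFun 2 𝕜 n), ← toLpLin_eq_toLin,
    LinearMap.trace_eq_sum_inner _ b]
  simp [EuclideanSpace.inner_eq_star_dotProduct, dotProduct_comm]

lemma _root_.OrthonormalBasis.star_dotProduct_self {ι : Type*} [Fintype ι]
    (b : OrthonormalBasis ι 𝕜 (EuclideanSpace 𝕜 n)) (i : ι) :
    star ⇑(b i) ⬝ᵥ ⇑(b i) = 1 := by
  rw [dotProduct_comm, ← EuclideanSpace.inner_eq_star_dotProduct, inner_self_eq_norm_sq_to_K,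
    b.orthonormal.1 i]
  simp

variable [DecidableEq n] {A : Matrix n n 𝕜}

namespace IsHermitian

lemma trace_cfc (hA : A.IsHermitian) (f : ℝ → ℝ) :
    (cfc f A).trace = ∑ i, (f (hA.eigenvalues i) : 𝕜) := by
  rw [hA.cfc_eq, IsHermitian.cfc, Unitary.conjStarAlgAut_apply, trace_mul_cycle,
    Unitary.coe_star_mul_self, one_mul, trace_diagonal]
  simp

lemma star_dotProduct_cfc_mulVec (hA : A.IsHermitian) (f : ℝ → ℝ) (v : n → 𝕜) :
    star v ⬝ᵥ cfc f A *ᵥ v = ∑ j, (f (hA.eigenvalues j) *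
      ‖(star (hA.eigenvectorUnitary : Matrix n n 𝕜) *ᵥ v) j‖ ^ 2 : ℝ) := by
  rw [hA.cfc_eq, IsHermitian.cfc, Unitary.conjStarAlgAut_apply, ← mulVec_mulVec, ← mulVec_mulVec,
    dotProduct_mulVec]
  set w := star (hA.eigenvectorUnitary : Matrix n n 𝕜) *ᵥ v
  have hw : star v ᵥ* (hA.eigenvectorUnitary : Matrix n n 𝕜) = star w := by
    simp [w, star_mulVec, star_eq_conjTranspose]
  rw [hw, dotProduct, RCLike.ofReal_sum]
  refine Finset.sum_congr rfl fun j _ => ?_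
  simp only [mulVec_diagonal, Function.comp_apply, Pi.star_apply, RCLike.star_def]
  push_cast
  rw [← RCLike.conj_mul]
  ring

lemma re_star_dotProduct_cfc_mulVec (hA : A.IsHermitian) (f : ℝ → ℝ) (v : n → 𝕜) :
    RCLike.re (star v ⬝ᵥ cfc f A *ᵥ v) = ∑ j,
      ‖(star (hA.eigenvectorUnitary : Matrix n n 𝕜) *ᵥ v) j‖ ^ 2 • f (hA.eigenvalues j) := by
  simp only [hA.star_dotProduct_cfc_mulVec f v, RCLike.ofReal_re, smul_eq_mul, mul_comm]

lemma sum_norm_sq_star_eigenvectorUnitary_mulVec (hA : A.IsHermitian) {v : n → 𝕜}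
    (hv : star v ⬝ᵥ v = 1) :
    ∑ j, ‖(star (hA.eigenvectorUnitary : Matrix n n 𝕜) *ᵥ v) j‖ ^ 2 = 1 := by
  have h := hA.re_star_dotProduct_cfc_mulVec (fun _ => 1) v
  rw [cfc_const_one ℝ A, one_mulVec, hv] at h
  simpa using h.symm

lemma re_star_dotProduct_mulVec_mem (hA : A.IsHermitian) {s : Set ℝ} (hs_conv : Convex ℝ s)
    (hs : ∀ i, hA.eigenvalues i ∈ s) {v : n → 𝕜} (hv : star v ⬝ᵥ v = 1) :
    RCLike.re (star v ⬝ᵥ A *ᵥ v) ∈ s := by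
  have h := hA.re_star_dotProduct_cfc_mulVec id v
  rw [cfc_id ℝ A] at h
  rw [h]
  exact hs_conv.sum_mem (fun j _ => sq_nonneg _) (hA.sum_norm_sq_star_eigenvectorUnitary_mulVec hv)
    fun j _ => hs j

theorem map_re_star_dotProduct_mulVec_le (hA : A.IsHermitian) {s : Set ℝ} {f : ℝ → ℝ}
    (hf : ConvexOn ℝ s f) (hs : ∀ i, hA.eigenvalues i ∈ s) {v : n → 𝕜}
    (hv : star v ⬝ᵥ v = 1) :
    f (RCLike.re (star v ⬝ᵥ A *ᵥ v)) ≤ RCLike.re (star v ⬝ᵥ cfc f A *ᵥ v) := by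
  have h := hA.re_star_dotProduct_cfc_mulVec id v
  rw [cfc_id ℝ A] at h
  rw [h, hA.re_star_dotProduct_cfc_mulVec f v]
  exact hf.map_sum_le (fun j _ => sq_nonneg _) (hA.sum_norm_sq_star_eigenvectorUnitary_mulVec hv)
    fun j _ => hs j

/-- The Peierls inequality. -/
theorem sum_map_re_star_dotProduct_mulVec_le_re_trace (hA : A.IsHermitian) {s : Set ℝ}
    {f : ℝ → ℝ} (hf : ConvexOn ℝ s f) (hs : ∀ i, hA.eigenvalues i ∈ s) {ι : Type*} [Fintype ι]
    (b : OrthonormalBasis ι 𝕜 (EuclideanSpace 𝕜 n)) :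
    ∑ i, f (RCLike.re (star ⇑(b i) ⬝ᵥ A *ᵥ ⇑(b i))) ≤ RCLike.re (cfc f A).trace := by
  rw [trace_eq_sum_star_dotProduct_mulVec _ b, map_sum]
  exact Finset.sum_le_sum fun i _ =>
    hA.map_re_star_dotProduct_mulVec_le hf hs (b.star_dotProduct_self i)

end IsHermitian

/-- Jensen's trace inequality. -/
theorem re_trace_cfc_sum_smul_le {ι : Type*} [Fintype ι] {s : Set ℝ} {f : ℝ → ℝ}
    (hf : ConvexOn ℝ s f) {A : ι → Matrix n n 𝕜} (hA : ∀ k, (A k).IsHermitian)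
    (hs : ∀ k i, (hA k).eigenvalues i ∈ s) {γ : ι → ℝ} (hγ : ∀ k, 0 ≤ γ k)
    (hγ1 : ∑ k, γ k = 1) :
    RCLike.re (cfc f (∑ k, γ k • A k)).trace ≤ ∑ k, γ k * RCLike.re (cfc f (A k)).trace := by
  have hSH : (∑ k, γ k • A k).IsHermitian :=
    isSelfAdjoint_sum _ fun k _ => (IsSelfAdjoint.all (γ k)).smul (hA k).isSelfAdjoint
  set b := hSH.eigenvectorBasis
  set x : ι → n → ℝ := fun k i => RCLike.re (star ⇑(b i) ⬝ᵥ A k *ᵥ ⇑(b i))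
  have hx : ∀ k i, x k i ∈ s := fun k i =>
    (hA k).re_star_dotProduct_mulVec_mem hf.1 (hs k) (b.star_dotProduct_self i)
  have heig : ∀ i, hSH.eigenvalues i = ∑ k, γ k * x k i := by
    intro i
    rw [hSH.eigenvalues_eq]
    simp [x, b, sum_mulVec, dotProduct_sum, smul_mulVec, RCLike.smul_re]
  calc RCLike.re (cfc f (∑ k, γ k • A k)).trace = ∑ i, f (∑ k, γ k * x k i) := by
        simp [hSH.trace_cfc, heig]
    _ ≤ ∑ i, ∑ k, γ k * f (x k i) := Finset.sum_le_sum fun i _ =>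
        by simpa using hf.map_sum_le (fun k _ => hγ k) hγ1 (fun k _ => hx k i)
    _ = ∑ k, γ k * ∑ i, f (x k i) := by
        rw [Finset.sum_comm]
        simp [Finset.mul_sum]
    _ ≤ ∑ k, γ k * RCLike.re (cfc f (A k)).trace :=
        Finset.sum_le_sum fun k _ => mul_le_mul_of_nonneg_left
          ((hA k).sum_map_re_star_dotProduct_mulVec_le_re_trace hf (hs k) b) (hγ k)

lemma PosSemidef.posSemidef_cfc (hA : A.PosSemidef) {f : ℝ → ℝ}
    (hf : ∀ t ∈ Set.Ici 0, 0 ≤ f t) : (cfc f A).PosSemidef := by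
  rw [← nonneg_iff_posSemidef]
  exact cfc_nonneg fun t ht => hf t (spectrum_nonneg_of_nonneg hA.nonneg ht)

lemma PosSemidef.trNorm_eq_re_trace {P : Matrix n n ℂ} (hP : P.PosSemidef) :
    trNorm P = P.trace.re := by
  have hsqrt : cfc Real.sqrt (P ^ 2) = P := by
    rw [← cfc_comp_pow Real.sqrt 2 P (ha := hP.isHermitian.isSelfAdjoint)]
    calc cfc (fun t => √(t ^ 2)) P = cfc id P :=
          cfc_congr fun t ht => Real.sqrt_sq (spectrum_nonneg_of_nonneg hP.nonneg ht)
      _ = P := cfc_id ℝ P hP.isHermitian.isSelfAdjoint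
  rw [trNorm, matAbs, msqrt, hP.isHermitian.eq, ← sq, hsqrt]

end Matrix

theorem traceNorm_jensen_convex_general {n : Type*} [Fintype n] [DecidableEq n] {m : ℕ}
    (φ : ℝ → ℝ) (hconv : ConvexOn ℝ (Set.Ici 0) φ)
    (hφpos : ∀ t ∈ Set.Ici (0 : ℝ), 0 ≤ φ t)
    (A : Fin m → Matrix n n ℂ) (hA : ∀ k, (A k).PosSemidef)
    (γ : Fin m → ℝ) (hγ : ∀ k, 0 ≤ γ k) (hγ1 : ∑ k, γ k = 1) :
    trNorm (mfun φ (∑ k, (γ k : ℂ) • A k)) ≤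
      trNorm (∑ k, (γ k : ℂ) • mfun φ (A k)) := by
  have hφA : ∀ k, (cfc φ (A k)).PosSemidef := fun k => (hA k).posSemidef_cfc hφpos
  have hS : (∑ k, γ k • A k).PosSemidef := posSemidef_sum _ fun k _ => (hA k).smul (hγ k)
  have hT : (∑ k, γ k • cfc φ (A k)).PosSemidef :=
    posSemidef_sum _ fun k _ => (hφA k).smul (hγ k)
  simp only [mfun, Complex.coe_smul]
  rw [(hS.posSemidef_cfc hφpos).trNorm_eq_re_trace, hT.trNorm_eq_re_trace, trace_sum]
  simpa using re_trace_cfc_sum_smul_le hconv (fun k => (hA k).isHermitian)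
    (fun k => (hA k).eigenvalues_nonneg) hγ hγ1

/-- Jensen-type inequality for the trace norm and a convex function. -/
theorem traceNorm_jensen_convex {n : Type*} [Fintype n] [DecidableEq n] {m : ℕ}
    (φ : ℝ → ℝ) (hconv : ConvexOn ℝ (Set.Ici 0) φ)
    (hcont : ContinuousOn φ (Set.Ici 0))
    (hφ0 : φ 0 = 0) (hφpos : ∀ t ∈ Set.Ici (0 : ℝ), 0 ≤ φ t)
    (A : Fin m → Matrix n n ℂ) (hA : ∀ k, (A k).PosSemidef)
    (γ : Fin m → ℝ) (hγ : ∀ k, 0 ≤ γ k) (hγ1 : ∑ k, γ k = 1) :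
    trNorm (mfun φ (∑ k, (γ k : ℂ) • A k)) ≤
      trNorm (∑ k, (γ k : ℂ) • mfun φ (A k)) :=
  traceNorm_jensen_convex_general φ hconv hφpos A hA γ hγ hγ1
end

section
/- Let p > 1 and 1/p + 1/q = 1, and let A, B be positive definite n×n complex matrices. Then for every vector x ∈ C^n: ⟨x, (B^q ♯_{1/p} A^p) x⟩ ≤ ⟨x, B^q x⟩^{1−1/p} · ⟨x, A^p x⟩^{1/p}. -/
open Matrix
open scoped ComplexOrder

/-!
For `S = C^{1/2}` and `X = S⁻¹ D S⁻¹`, concavity of `u ↦ u ^ θ` puts `X ^ θ` below each of its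
tangent lines `k ^ θ ((1 - θ) + (θ / k) X)`. Conjugating by `S` gives, in the Loewner order,
`C ♯_θ D ≤ k ^ θ ((1 - θ) C + (θ / k) D)` for every `k > 0`; evaluating at `x` and choosing
`k = ⟨x, D x⟩ / ⟨x, C x⟩` turns the right-hand side into `⟨x, C x⟩ ^ (1 - θ) ⟨x, D x⟩ ^ θ`.
-/

open scoped MatrixOrder

/-- The right-hand side is the tangent line at `k` of the concave map `u ↦ u ^ θ`. -/
theorem Real.rpow_le_tangent {θ k u : ℝ} (hθ : θ ∈ Set.Icc (0 : ℝ) 1) (hk : 0 < k) (hu : 0 ≤ u) :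
    u ^ θ ≤ k ^ θ * ((1 - θ) + θ / k * u) := by
  have amgm := Real.geom_mean_le_arith_mean2_weighted (sub_nonneg.2 hθ.2) hθ.1 zero_le_one
    (div_nonneg hu hk.le) (sub_add_cancel 1 θ)
  rw [Real.one_rpow, one_mul, mul_one, Real.div_rpow hu hk.le, div_le_iff₀' (by positivity)]
    at amgm
  rwa [div_mul_eq_mul_div, mul_div_assoc]

namespace Matrix

variable {n : Type*} [Fintype n]

theorem re_dotProduct_mulVec_mono {𝕜 : Type*} [RCLike 𝕜] {A B : Matrix n n 𝕜} (hAB : A ≤ B)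
    (x : n → 𝕜) : RCLike.re (star x ⬝ᵥ A *ᵥ x) ≤ RCLike.re (star x ⬝ᵥ B *ᵥ x) := by
  have h := (RCLike.nonneg_iff.mp ((le_iff.mp hAB).dotProduct_mulVec_nonneg x)).1
  simpa [sub_mulVec, dotProduct_sub] using h

variable [DecidableEq n]

theorem continuousOn_spectrum (f : ℝ → ℝ) (A : Matrix n n ℂ) :
    ContinuousOn f (spectrum ℝ A) := by
  -- the spectrum is finite, so every function on it is continuous
  rw [continuousOn_iff_continuous_domRestrict]
  fun_prop

theorem msqrt_posDef {A : Matrix n n ℂ} (hA : A.PosDef) : (msqrt A).PosDef :=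
  IsStrictlyPositive.posDef <| (cfc_isStrictlyPositive_iff _ _ (ha := hA.1)).2 fun _ ht =>
    Real.sqrt_pos.2 (hA.isStrictlyPositive.spectrum_pos ht)

theorem mpow_posDef {A : Matrix n n ℂ} (hA : A.PosDef) (t : ℝ) : (mpow A t).PosDef :=
  IsStrictlyPositive.posDef <| (cfc_isStrictlyPositive_iff _ _ (continuousOn_spectrum _ A) hA.1).2
    fun _ hu => Real.rpow_pos_of_pos (hA.isStrictlyPositive.spectrum_pos hu) t

theorem msqrt_mul_self {A : Matrix n n ℂ} (hA : A.PosSemidef) : msqrt A * msqrt A = A := by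
  rw [msqrt, ← cfc_mul ..]
  conv_rhs => rw [← cfc_id ℝ A hA.1]
  exact cfc_congr fun t ht => Real.mul_self_sqrt (spectrum_nonneg_of_nonneg hA.nonneg ht)

theorem mpow_le_tangent {X : Matrix n n ℂ} (hX : X.PosSemidef) {θ : ℝ}
    (hθ : θ ∈ Set.Icc (0 : ℝ) 1) {k : ℝ} (hk : 0 < k) :
    mpow X θ ≤ k ^ θ • ((1 - θ) • 1 + (θ / k) • X) := by
  calc mpow X θ ≤ cfc (fun u => k ^ θ * ((1 - θ) + θ / k * u)) X :=
        cfc_mono (fun u hu => Real.rpow_le_tangent hθ hk (spectrum_nonneg_of_nonneg hX.nonneg hu))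
          (continuousOn_spectrum _ X)
    _ = k ^ θ • ((1 - θ) • 1 + (θ / k) • X) := by
      rw [cfc_const_mul .., cfc_const_add .., ← cfc_const_mul_id (θ / k) X hX.1,
        Algebra.algebraMap_eq_smul_one]
      rfl

theorem geomW_le_tangent {C D : Matrix n n ℂ} (hC : C.PosDef) (hD : D.PosSemidef) {θ : ℝ}
    (hθ : θ ∈ Set.Icc (0 : ℝ) 1) {k : ℝ} (hk : 0 < k) :
    geomW C D θ ≤ k ^ θ • ((1 - θ) • C + (θ / k) • D) := by
  set S := msqrt C
  have hS : S.PosDef := msqrt_posDef hC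
  have hSdet : IsUnit S.det := (isUnit_iff_isUnit_det S).mp hS.isUnit
  have hX : (S⁻¹ * D * S⁻¹).PosSemidef := by
    simpa [conjTranspose_nonsing_inv, hS.1.eq] using hD.conjTranspose_mul_mul_same S⁻¹
  have hSXS : S * (S⁻¹ * D * S⁻¹) * S = D := by
    rw [← mul_assoc, ← mul_assoc, nonsing_inv_mul_cancel_right (h := hSdet),
      mul_nonsing_inv _ hSdet, one_mul]
  have key := hS.1.isSelfAdjoint.conjugate_le_conjugate (mpow_le_tangent hX hθ hk)
  have hSS : S * S = C := msqrt_mul_self hC.posSemidef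
  simp only [Matrix.mul_smul, Matrix.smul_mul, Matrix.mul_add, Matrix.add_mul, Matrix.mul_one, hSS,
    hSXS] at key
  exact key

theorem re_dotProduct_geomW_mulVec_le {C D : Matrix n n ℂ} (hC : C.PosDef) (hD : D.PosDef)
    {θ : ℝ} (hθ : θ ∈ Set.Icc (0 : ℝ) 1) (x : n → ℂ) :
    (star x ⬝ᵥ geomW C D θ *ᵥ x).re ≤
      (star x ⬝ᵥ C *ᵥ x).re ^ (1 - θ) * (star x ⬝ᵥ D *ᵥ x).re ^ θ := by
  rcases eq_or_ne x 0 with rfl | hx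
  · simp only [star_zero, zero_dotProduct, Complex.zero_re]
    positivity
  set s := (star x ⬝ᵥ C *ᵥ x).re
  set t := (star x ⬝ᵥ D *ᵥ x).re
  have hs : 0 < s := hC.re_dotProduct_pos hx
  have ht : 0 < t := hD.re_dotProduct_pos hx
  calc (star x ⬝ᵥ geomW C D θ *ᵥ x).re
      ≤ (star x ⬝ᵥ ((t / s) ^ θ • ((1 - θ) • C + (θ / (t / s)) • D)) *ᵥ x).re :=
        re_dotProduct_mulVec_mono (geomW_le_tangent hC hD.posSemidef hθ (div_pos ht hs)) x
    _ = (t / s) ^ θ * ((1 - θ) * s + θ / (t / s) * t) := by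
        simp only [add_mulVec, smul_mulVec, dotProduct_add, dotProduct_smul, Complex.add_re,
          Complex.smul_re, smul_eq_mul, s, t]
    _ = s ^ (1 - θ) * t ^ θ := by
        rw [Real.div_rpow ht.le hs.le, Real.rpow_sub hs, Real.rpow_one]
        field_simp
        ring

end Matrix

theorem weighted_geom_inner_le_general {n : Type*} [Fintype n] [DecidableEq n]
    (A B : Matrix n n ℂ) (hA : A.PosDef) (hB : B.PosDef)
    (p q : ℝ) (hp : 1 < p)
    (x : n → ℂ) :
    (dotProduct (star x) ((geomW (mpow B q) (mpow A p) (1 / p)) *ᵥ x)).re ≤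
      (dotProduct (star x) ((mpow B q) *ᵥ x)).re ^ (1 - 1 / p) *
        (dotProduct (star x) ((mpow A p) *ᵥ x)).re ^ (1 / p) := by
  have hθ : 1 / p ∈ Set.Icc (0 : ℝ) 1 :=
    ⟨by positivity, (div_le_one (zero_lt_one.trans hp)).2 hp.le⟩
  exact Matrix.re_dotProduct_geomW_mulVec_le (mpow_posDef hB q) (mpow_posDef hA p) hθ x

/-- Pointwise form of Theorem S2: `⟨x, (B^q ♯_{1/p} A^p) x⟩ ≤ ⟨x, B^q x⟩^{1-1/p} ⟨x, A^p x⟩^{1/p}`. -/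
theorem weighted_geom_inner_le {n : Type*} [Fintype n] [DecidableEq n]
    (A B : Matrix n n ℂ) (hA : A.PosDef) (hB : B.PosDef)
    (p q : ℝ) (hp : 1 < p) (hpq : 1 / p + 1 / q = 1)
    (x : n → ℂ) :
    (dotProduct (star x) ((geomW (mpow B q) (mpow A p) (1 / p)) *ᵥ x)).re ≤
      (dotProduct (star x) ((mpow B q) *ᵥ x)).re ^ (1 - 1 / p) *
        (dotProduct (star x) ((mpow A p) *ᵥ x)).re ^ (1 / p) :=
  weighted_geom_inner_le_general A B hA hB p q hp x
end

section
/- Cauchy–Schwarz for matrix-weighted sums: let A₁,…,A_m, B₁,…,B_m be n×n complex matrices and X₁,…,X_m matrices with ‖Xₖ‖ ≤ 1 (operator norm). Then for the trace norm, ‖ Σₖ Aₖ* Xₖ Bₖ ‖₁ ≤ ‖ Σₖ Aₖ* Aₖ ‖₁^{1/2} · ‖ Σₖ Bₖ* Bₖ ‖₁^{1/2}. -/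
open Matrix
open scoped ComplexOrder

/-! With `vᵢ` an orthonormal eigenbasis of `TᴴT`, the vectors `T vᵢ` are pairwise orthogonal
and the `‖T vᵢ‖` are the singular values of `T`, so `‖T‖₁ = ∑ᵢ Re ⟪uᵢ, T vᵢ⟫` for `uᵢ` the
normalised `T vᵢ`. For `T = ∑ₖ Aₖᴴ Xₖ Bₖ` each summand is
`∑ₖ Re ⟪Aₖ uᵢ, Xₖ Bₖ vᵢ⟫ ≤ ∑ₖ ‖Aₖ uᵢ‖ ‖Bₖ vᵢ‖`, and the Cauchy–Schwarz inequality over the pairs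
`(i, k)` leaves `∑ᵢₖ ‖Aₖ uᵢ‖²`. Bessel's inequality for the rows of `Aₖ` bounds this by
`tr ∑ₖ Aₖᴴ Aₖ`, which is the trace norm of this positive matrix; likewise for `B`. -/

open scoped InnerProductSpace

local notation "toE" => Matrix.toEuclideanCLM (𝕜 := ℂ)

section InnerProductSpace

variable {𝕜 E ι : Type*} [RCLike 𝕜] [NormedAddCommGroup E] [InnerProductSpace 𝕜 E]

theorem sum_norm_inner_sq_le_of_pairwise_inner_eq_zero [Fintype ι] {u : ι → E}
    (ho : Pairwise fun i j => ⟪u i, u j⟫_𝕜 = 0) (hn : ∀ i, u i ≠ 0 → ‖u i‖ = 1) (x : E) :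
    ∑ i, ‖⟪u i, x⟫_𝕜‖ ^ 2 ≤ ‖x‖ ^ 2 := by
  classical
  have hon : Orthonormal 𝕜 fun i : {i // u i ≠ 0} => u i :=
    ⟨fun i => hn i i.2, fun _ _ hij => ho (Subtype.coe_ne_coe.mpr hij)⟩
  have hzero : ∑ i : {i // ¬u i ≠ 0}, ‖⟪u i, x⟫_𝕜‖ ^ 2 = 0 :=
    Finset.sum_eq_zero fun i _ => by simp [not_not.mp i.2]
  rw [← Fintype.sum_subtype_add_sum_subtype (fun i => u i ≠ 0), hzero, add_zero]
  exact hon.sum_inner_products_le x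

theorem inner_smul_inv_norm_self (x : E) : ⟪(‖x‖⁻¹ : 𝕜) • x, x⟫_𝕜 = ‖x‖ := by
  rcases eq_or_ne x 0 with rfl | hx
  · simp
  have : ‖x‖ ≠ 0 := norm_ne_zero_iff.mpr hx
  rw [inner_smul_left, inner_self_eq_norm_sq_to_K, map_inv₀, RCLike.conj_ofReal]
  field_simp

end InnerProductSpace

section Matrix

variable {n ι : Type*} [Fintype n] [DecidableEq n]

theorem Matrix.IsHermitian.trace_cfc_s19 {𝕜 : Type*} [RCLike 𝕜] {M : Matrix n n 𝕜}
    (hM : M.IsHermitian) (f : ℝ → ℝ) :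
    (cfc f M).trace = ∑ i, (f (hM.eigenvalues i) : 𝕜) := by
  rw [hM.cfc_eq, Matrix.IsHermitian.cfc, Unitary.conjStarAlgAut_apply, Matrix.trace_mul_cycle,
    Unitary.coe_star_mul_self, Matrix.one_mul, Matrix.trace_diagonal]
  simp

open scoped MatrixOrder in
theorem matAbs_of_posSemidef {P : Matrix n n ℂ} (hP : P.PosSemidef) : matAbs P = P := by
  have hPP : 0 ≤ Pᴴ * P := star_mul_self_nonneg P
  rw [matAbs, msqrt, ← cfcₙ_eq_cfc, ← CFC.sqrt_eq_real_sqrt _ hPP, hP.isHermitian.eq,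
    CFC.sqrt_mul_self P hP.nonneg]

theorem sum_norm_toEuclideanCLM_sq_le [Fintype ι] (M : Matrix n n ℂ) {u : ι → EuclideanSpace ℂ n}
    (ho : Pairwise fun i j => ⟪u i, u j⟫_ℂ = 0) (hn : ∀ i, u i ≠ 0 → ‖u i‖ = 1) :
    ∑ i, ‖toE M (u i)‖ ^ 2 ≤ (Mᴴ * M).trace.re := by
  set r : n → EuclideanSpace ℂ n := fun j => WithLp.toLp 2 (star (M j))
  have hrow : ∀ x j, (toE M x) j = ⟪r j, x⟫_ℂ := fun x j => by
    simp [r, EuclideanSpace.inner_eq_star_dotProduct, mulVec, dotProduct_comm]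
  have htrace : (Mᴴ * M).trace.re = ∑ j, ‖r j‖ ^ 2 := by
    simp only [r, EuclideanSpace.norm_sq_eq, trace, diag_apply, mul_apply, conjTranspose_apply,
      Complex.re_sum, Pi.star_apply, norm_star]
    rw [Finset.sum_comm]
    simp [Complex.conj_mul', ← Complex.ofReal_pow]
  calc ∑ i, ‖toE M (u i)‖ ^ 2 = ∑ j, ∑ i, ‖⟪u i, r j⟫_ℂ‖ ^ 2 := by
        simp_rw [EuclideanSpace.norm_sq_eq, hrow, norm_inner_symm]
        exact Finset.sum_comm
    _ ≤ ∑ j, ‖r j‖ ^ 2 := Finset.sum_le_sum fun j _ =>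
        sum_norm_inner_sq_le_of_pairwise_inner_eq_zero ho hn (r j)
    _ = (Mᴴ * M).trace.re := htrace.symm

theorem re_inner_toEuclideanCLM_sum_le [Fintype ι] (A B X : ι → Matrix n n ℂ)
    (hX : ∀ k, opNorm (X k) ≤ 1) (x y : EuclideanSpace ℂ n) :
    (⟪x, toE (∑ k, (A k)ᴴ * X k * B k) y⟫_ℂ).re ≤ ∑ k, ‖toE (A k) x‖ * ‖toE (B k) y‖ := by
  simp only [map_sum, FunLike.coe_sum, Finset.sum_apply, inner_sum, Complex.re_sum]
  refine Finset.sum_le_sum fun k _ => ?_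
  have hadj : toE ((A k)ᴴ * X k * B k) y = (toE (A k)).adjoint (toE (X k) (toE (B k) y)) := by
    rw [← ContinuousLinearMap.star_eq_adjoint, ← map_star, map_mul, map_mul]
    rfl
  calc (⟪x, toE ((A k)ᴴ * X k * B k) y⟫_ℂ).re
      = (⟪toE (A k) x, toE (X k) (toE (B k) y)⟫_ℂ).re := by
        rw [hadj, ContinuousLinearMap.adjoint_inner_right]
    _ ≤ ‖toE (A k) x‖ * ‖toE (X k) (toE (B k) y)‖ :=
        (Complex.re_le_norm _).trans (norm_inner_le_norm _ _)
    _ ≤ ‖toE (A k) x‖ * ‖toE (B k) y‖ := by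
        gcongr
        simpa using (toE (X k)).le_of_opNorm_le (hX k) (toE (B k) y)

theorem sum_sum_norm_toEuclideanCLM_sq_le_trNorm [Fintype ι] {κ : Type*} [Fintype κ]
    (M : κ → Matrix n n ℂ) {u : ι → EuclideanSpace ℂ n}
    (ho : Pairwise fun i j => ⟪u i, u j⟫_ℂ = 0) (hn : ∀ i, u i ≠ 0 → ‖u i‖ = 1) :
    ∑ k, ∑ i, ‖toE (M k) (u i)‖ ^ 2 ≤ trNorm (∑ k, (M k)ᴴ * M k) := by
  have hpsd : (∑ k, (M k)ᴴ * M k).PosSemidef :=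
    posSemidef_sum _ fun k _ => posSemidef_conjTranspose_mul_self (M k)
  rw [trNorm, matAbs_of_posSemidef hpsd, trace_sum, Complex.re_sum]
  exact Finset.sum_le_sum fun k _ => sum_norm_toEuclideanCLM_sq_le (M k) ho hn

theorem inner_toEuclideanCLM_eigenvectorBasis {T : Matrix n n ℂ} (H : (Tᴴ * T).IsHermitian)
    (i j : n) :
    ⟪toE T (H.eigenvectorBasis i), toE T (H.eigenvectorBasis j)⟫_ℂ =
      if i = j then (H.eigenvalues i : ℂ) else 0 := by
  have heig :
      toE (Tᴴ * T) (H.eigenvectorBasis j) = (H.eigenvalues j : ℂ) • H.eigenvectorBasis j :=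
    WithLp.ofLp_injective 2 (by simpa using H.mulVec_eigenvectorBasis j)
  have hadj :
      (toE T).adjoint (toE T (H.eigenvectorBasis j)) = toE (Tᴴ * T) (H.eigenvectorBasis j) := by
    rw [← ContinuousLinearMap.star_eq_adjoint, ← map_star, map_mul]
    rfl
  rw [← ContinuousLinearMap.adjoint_inner_right, hadj, heig, inner_smul_right,
    orthonormal_iff_ite.mp H.eigenvectorBasis.orthonormal i j]
  split_ifs with h <;> simp [h]

theorem trNorm_eq_sum_norm_toEuclideanCLM_eigenvectorBasis {T : Matrix n n ℂ}
    (H : (Tᴴ * T).IsHermitian) : trNorm T = ∑ i, ‖toE T (H.eigenvectorBasis i)‖ := by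
  rw [trNorm, matAbs, msqrt, H.trace_cfc_s19, Complex.re_sum]
  refine Finset.sum_congr rfl fun i _ => ?_
  rw [norm_eq_sqrt_re_inner (𝕜 := ℂ), inner_toEuclideanCLM_eigenvectorBasis H, if_pos rfl]
  rfl

theorem exists_trNorm_eq_sum_re_inner (T : Matrix n n ℂ) :
    ∃ u v : n → EuclideanSpace ℂ n, (Pairwise fun i j => ⟪u i, u j⟫_ℂ = 0) ∧
      (∀ i, u i ≠ 0 → ‖u i‖ = 1) ∧ Orthonormal ℂ v ∧
      trNorm T = ∑ i, (⟪u i, toE T (v i)⟫_ℂ).re := by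
  set H := isHermitian_conjTranspose_mul_self T
  set w := fun i => toE T (H.eigenvectorBasis i)
  have hw : Pairwise fun i j => ⟪w i, w j⟫_ℂ = 0 := fun i j hij => by
    simp [w, inner_toEuclideanCLM_eigenvectorBasis H, hij]
  refine ⟨fun i => (‖w i‖⁻¹ : ℂ) • w i, H.eigenvectorBasis, fun i j hij => ?_, fun i hi => ?_,
    H.eigenvectorBasis.orthonormal, ?_⟩
  · simp [hw hij]
  · exact norm_smul_inv_norm fun h => hi (by simp [h])
  · rw [trNorm_eq_sum_norm_toEuclideanCLM_eigenvectorBasis H]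
    exact Finset.sum_congr rfl fun i _ =>
      (congrArg Complex.re (inner_smul_inv_norm_self (𝕜 := ℂ) (w i))).symm

end Matrix

/-- Cauchy–Schwarz inequality for matrix-weighted sums in the trace norm. -/
theorem traceNorm_cauchy_schwarz {n : Type*} [Fintype n] [DecidableEq n] {m : ℕ}
    (A B X : Fin m → Matrix n n ℂ) (hX : ∀ k, opNorm (X k) ≤ 1) :
    trNorm (∑ k, (A k)ᴴ * X k * B k) ≤
      trNorm (∑ k, (A k)ᴴ * A k) ^ ((1 : ℝ) / 2) *
        trNorm (∑ k, (B k)ᴴ * B k) ^ ((1 : ℝ) / 2) := by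
  obtain ⟨u, v, hu, hu₁, hv, htr⟩ := exists_trNorm_eq_sum_re_inner (∑ k, (A k)ᴴ * X k * B k)
  set a : Fin m × n → ℝ := fun p => ‖toE (A p.1) (u p.2)‖
  set b : Fin m × n → ℝ := fun p => ‖toE (B p.1) (v p.2)‖
  have ha : ∑ p, a p ^ 2 ≤ trNorm (∑ k, (A k)ᴴ * A k) := by
    rw [Fintype.sum_prod_type]
    exact sum_sum_norm_toEuclideanCLM_sq_le_trNorm A hu hu₁
  have hb : ∑ p, b p ^ 2 ≤ trNorm (∑ k, (B k)ᴴ * B k) := by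
    rw [Fintype.sum_prod_type]
    exact sum_sum_norm_toEuclideanCLM_sq_le_trNorm B hv.2 fun i _ => hv.1 i
  calc trNorm (∑ k, (A k)ᴴ * X k * B k)
      ≤ ∑ i, ∑ k, a (k, i) * b (k, i) := by
        rw [htr]
        exact Finset.sum_le_sum fun i _ => re_inner_toEuclideanCLM_sum_le A B X hX (u i) (v i)
    _ = ∑ p, a p * b p := by rw [Fintype.sum_prod_type, Finset.sum_comm]
    _ ≤ √(∑ p, a p ^ 2) * √(∑ p, b p ^ 2) := Real.sum_mul_le_sqrt_mul_sqrt _ _ _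
    _ ≤ √(trNorm (∑ k, (A k)ᴴ * A k)) * √(trNorm (∑ k, (B k)ᴴ * B k)) :=
        mul_le_mul (Real.sqrt_le_sqrt ha) (Real.sqrt_le_sqrt hb) (Real.sqrt_nonneg _)
          (Real.sqrt_nonneg _)
    _ = _ := by rw [Real.sqrt_eq_rpow, Real.sqrt_eq_rpow]
end
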